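/- arXiv:1112.4406 — 2 statements merged into one kernel-verified Lean document; each statement's English description precedes it below -/
import Mathlib

section
/- Let U₁, U₂, U₃ be n-point extensions with bases T₁, T₂, T₃, and define U ⤳ U' to mean some speedup of U relative to its base is relatively isomorphic to U'. Then ⤳ is transitive: if U₁ ⤳ U₂ and U₂ ⤳ U₃, then U₁ ⤳ U₃. -/
open MeasureTheory

/-- `U ⤳ U'` for `n`-point extensions: some speedup of the extension `U` relative to
its base `T` is relatively isomorphic to `U'`.  The relative isomorphism is recorded
at the level of bases and cocycle generators: there are a measurable `p : X → ℕ`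
(`p ≥ 1`), a measure isomorphism `φ` from the speedup `T^p` to `T'`, and a measurable
`α : X → S_n` conjugating the sped-up cocycle generator `x ↦ σ(x, p(x))` to `σ'`. -/
def Leads {X X' : Type*} [MeasurableSpace X] [MeasurableSpace X'] {n : ℕ}
    (μ : Measure X) (μ' : Measure X') (T : Equiv.Perm X) (T' : Equiv.Perm X')
    (σ : X → ℤ → Equiv.Perm (Fin n)) (σ' : X' → ℤ → Equiv.Perm (Fin n)) : Prop :=
  ∃ p : X → ℕ, Measurable p ∧ (∀ x, 1 ≤ p x) ∧
    ∃ φ : X → X', ∃ ψ : X' → X,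
      MeasurePreserving φ μ μ' ∧ MeasurePreserving ψ μ' μ ∧
      (∀ᵐ x ∂μ, ψ (φ x) = x) ∧ (∀ᵐ y ∂μ', φ (ψ y) = y) ∧
      (∀ᵐ x ∂μ, φ ((T ^ (p x : ℤ)) x) = T' (φ x)) ∧
      ∃ α : X → Equiv.Perm (Fin n),
        (∀ π : Equiv.Perm (Fin n), MeasurableSet {x | α x = π}) ∧
        ∀ᵐ x ∂μ, σ' (φ x) 1 = α ((T ^ (p x : ℤ)) x) * σ x (p x : ℤ) * (α x)⁻¹

/-!
Write `S = T₁^p` for the first speedup. Along the `S`-orbit of `x`, the time `T₁` needs for `k`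
steps of `S` is `∑_{i<k} p(Sⁱx)`, and by the cocycle identity `φ` carries `Sᵏ` to `T₂ᵏ` and
`σ₂(φx, k)` to `α(Sᵏx) σ₁(x, ∑_{i<k} p(Sⁱx)) α(x)⁻¹`. Taking `k = q(φx)` shows that the speedup
of `T₁` with time `r(x) = ∑_{i<q(φx)} p(Sⁱx)` is relatively isomorphic to `U₃` via `φ' ∘ φ` with
transfer function `α'(φx) α(x)`. The relations given a.e. hold along whole `S`-orbits for a.e. `x`
because `S` is nonsingular.
-/

section Speedup

variable {X : Type*}

lemma Measurable.apply_index {Y ι : Type*} [MeasurableSpace X] [MeasurableSpace Y]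
    [MeasurableSpace ι] [Countable ι] [MeasurableSingletonClass ι]
    {f : ι → X → Y} (hf : ∀ i, Measurable (f i)) {p : X → ι} (hp : Measurable p) :
    Measurable fun x => f (p x) x :=
  (measurable_from_prod_countable_left (f := fun xi : X × ι => f xi.2 xi.1) hf).comp
    (measurable_id.prodMk hp)

lemma Measurable.perm_zpow_natCast [MeasurableSpace X] {T : Equiv.Perm X} (hT : Measurable T)
    (k : ℕ) : Measurable (T ^ (k : ℤ)) := by
  rw [zpow_natCast, Equiv.Perm.coe_pow]
  exact hT.iterate k

def speedup (T : Equiv.Perm X) (p : X → ℕ) (x : X) : X :=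
  (T ^ (p x : ℤ)) x

/-- The time `T` needs to travel `k` steps of its speedup `T^p`. -/
def speedupTime (T : Equiv.Perm X) (p : X → ℕ) (k : ℕ) (x : X) : ℕ :=
  ∑ i ∈ Finset.range k, p ((speedup T p)^[i] x)

variable (T : Equiv.Perm X) (p : X → ℕ)

lemma speedupTime_succ (k : ℕ) (x : X) :
    speedupTime T p (k + 1) x = p ((speedup T p)^[k] x) + speedupTime T p k x := by
  rw [speedupTime, Finset.sum_range_succ, add_comm]
  rfl

lemma zpow_speedupTime_apply (k : ℕ) (x : X) :
    (T ^ (speedupTime T p k x : ℤ)) x = (speedup T p)^[k] x := by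
  induction k with
  | zero => simp [speedupTime]
  | succ k ih =>
    rw [speedupTime_succ, Nat.cast_add, zpow_add, Equiv.Perm.mul_apply, ih,
      Function.iterate_succ_apply']
    rfl

variable {T p}

lemma one_le_speedupTime (hp : ∀ x, 1 ≤ p x) {k : ℕ} (hk : 1 ≤ k) (x : X) :
    1 ≤ speedupTime T p k x := by
  obtain ⟨k, rfl⟩ := Nat.exists_eq_add_of_le' hk
  rw [speedupTime_succ]
  exact (hp _).trans (Nat.le_add_right _ _)

variable [MeasurableSpace X]

lemma measurable_speedup (hT : Measurable T) (hp : Measurable p) : Measurable (speedup T p) :=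
  Measurable.apply_index (f := fun k : ℕ => ⇑(T ^ (k : ℤ))) hT.perm_zpow_natCast hp

lemma measurable_speedupTime (hT : Measurable T) (hp : Measurable p) (k : ℕ) :
    Measurable (speedupTime T p k) :=
  Finset.measurable_sum _ fun i _ => hp.comp ((measurable_speedup hT hp).iterate i)

/-- The preimage of a null set under `T^p` lies in the countably many preimages under the
powers `T^k`. -/
lemma quasiMeasurePreserving_speedup {μ : Measure X} (hT : MeasurePreserving T μ μ)
    (hp : Measurable p) : Measure.QuasiMeasurePreserving (speedup T p) μ μ := by
  have hS := measurable_speedup hT.measurable hp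
  refine ⟨hS, Measure.AbsolutelyContinuous.mk fun s hs hs0 => ?_⟩
  rw [Measure.map_apply hS hs]
  have hsub : speedup T p ⁻¹' s ⊆ ⋃ k : ℕ, ⇑(T ^ (k : ℤ)) ⁻¹' s :=
    fun x hx => Set.mem_iUnion.mpr ⟨p x, hx⟩
  refine measure_mono_null hsub (measure_iUnion_null fun k => ?_)
  have hTk : MeasurePreserving (⇑(T ^ (k : ℤ))) μ μ := by
    rw [zpow_natCast, Equiv.Perm.coe_pow]
    exact hT.iterate k
  rwa [hTk.measure_preimage hs.nullMeasurableSet]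

lemma ae_forall_iterate_speedup {μ : Measure X} (hT : MeasurePreserving T μ μ)
    (hp : Measurable p) {P : X → Prop} (hP : ∀ᵐ x ∂μ, P x) :
    ∀ᵐ x ∂μ, ∀ k, P ((speedup T p)^[k] x) :=
  ae_all_iff.mpr fun k => ((quasiMeasurePreserving_speedup hT hp).iterate k).ae hP

end Speedup

def IsCocycle {X G : Type*} [Group G] (T : Equiv.Perm X) (σ : X → ℤ → G) : Prop :=
  ∀ x (m k : ℤ), σ x (m + k) = σ ((T ^ k) x) m * σ x k

namespace IsCocycle

variable {X G : Type*} [Group G] {T : Equiv.Perm X} {σ : X → ℤ → G}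

lemma apply_zero (hσ : IsCocycle T σ) (x : X) : σ x 0 = 1 := by
  simpa using hσ x 0 0

lemma apply_speedupTime_succ (hσ : IsCocycle T σ) (p : X → ℕ) (k : ℕ) (x : X) :
    σ x (speedupTime T p (k + 1) x) =
      σ ((speedup T p)^[k] x) (p ((speedup T p)^[k] x)) * σ x (speedupTime T p k x) := by
  rw [speedupTime_succ, Nat.cast_add, hσ, zpow_speedupTime_apply]

end IsCocycle

section Orbit

variable {X X' G : Type*} {S : X → X} {T : Equiv.Perm X} {T' : Equiv.Perm X'} {p : X → ℕ}
  {φ : X → X'} {x : X}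

lemma apply_iterate_eq_zpow_apply (h : ∀ k, φ (S (S^[k] x)) = T' (φ (S^[k] x))) (k : ℕ) :
    φ (S^[k] x) = (T' ^ (k : ℤ)) (φ x) := by
  induction k with
  | zero => simp
  | succ k ih =>
    rw [Function.iterate_succ_apply', h, ih, Nat.cast_succ, add_comm, zpow_add, zpow_one,
      Equiv.Perm.mul_apply]

lemma apply_natCast_eq_conj_speedupTime [Group G] {α : X → G} {σ : X → ℤ → G}
    {σ' : X' → ℤ → G} (hσ : IsCocycle T σ) (hσ' : IsCocycle T' σ')
    (hconj : ∀ k, φ (speedup T p ((speedup T p)^[k] x)) = T' (φ ((speedup T p)^[k] x)))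
    (hcoc : ∀ k, σ' (φ ((speedup T p)^[k] x)) 1 =
      α (speedup T p ((speedup T p)^[k] x)) * σ ((speedup T p)^[k] x) (p ((speedup T p)^[k] x))
        * (α ((speedup T p)^[k] x))⁻¹) (k : ℕ) :
    σ' (φ x) k = α ((speedup T p)^[k] x) * σ x (speedupTime T p k x) * (α x)⁻¹ := by
  induction k with
  | zero => simp [speedupTime, hσ.apply_zero, hσ'.apply_zero]
  | succ k ih =>
    rw [Nat.cast_succ, add_comm, hσ', ← apply_iterate_eq_zpow_apply hconj, hcoc, ih,
      hσ.apply_speedupTime_succ, Function.iterate_succ_apply']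
    group

end Orbit

lemma ae_leftInverse_comp {X Y Z : Type*} [MeasurableSpace X] [MeasurableSpace Y]
    {μ : Measure X} {ν : Measure Y} {f : X → Y} {g : Y → X} {f' : Y → Z} {g' : Z → Y}
    (hf : Measure.QuasiMeasurePreserving f μ ν) (h : ∀ᵐ x ∂μ, g (f x) = x)
    (h' : ∀ᵐ y ∂ν, g' (f' y) = y) : ∀ᵐ x ∂μ, g (g' (f' (f x))) = x := by
  filter_upwards [hf.ae h', h] with x hx hx'
  rw [hx, hx']

lemma measurableSet_mul_eq {X G : Type*} [MeasurableSpace X] [Group G] [Countable G]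
    {α β : X → G} (hα : ∀ g, MeasurableSet {x | α x = g}) (hβ : ∀ g, MeasurableSet {x | β x = g})
    (g : G) : MeasurableSet {x | α x * β x = g} := by
  have h : {x | α x * β x = g} = ⋃ τ, {x | β x = τ} ∩ {x | α x = g * τ⁻¹} := by
    ext x
    simp only [Set.mem_ofPred_eq, Set.mem_iUnion, Set.mem_inter_iff, exists_eq_left',
      eq_mul_inv_iff_mul_eq]
  rw [h]
  exact .iUnion fun τ => (hβ τ).inter (hα _)

theorem leads_trans_general
    {X₁ X₂ X₃ : Type*} [MeasurableSpace X₁] [MeasurableSpace X₂] [MeasurableSpace X₃]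
    {n : ℕ}
    (μ₁ : Measure X₁)
    (μ₂ : Measure X₂)
    (μ₃ : Measure X₃)
    (T₁ : Equiv.Perm X₁) (T₂ : Equiv.Perm X₂) (T₃ : Equiv.Perm X₃)
    (hT₁ : MeasurePreserving T₁ μ₁ μ₁)
    (σ₁ : X₁ → ℤ → Equiv.Perm (Fin n)) (σ₂ : X₂ → ℤ → Equiv.Perm (Fin n))
    (σ₃ : X₃ → ℤ → Equiv.Perm (Fin n))
    (hσ₁ : ∀ x (m k : ℤ), σ₁ x (m + k) = σ₁ ((T₁ ^ k) x) m * σ₁ x k)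
    (hσ₂ : ∀ x (m k : ℤ), σ₂ x (m + k) = σ₂ ((T₂ ^ k) x) m * σ₂ x k)
    (h12 : Leads μ₁ μ₂ T₁ T₂ σ₁ σ₂) (h23 : Leads μ₂ μ₃ T₂ T₃ σ₂ σ₃) :
    Leads μ₁ μ₃ T₁ T₃ σ₁ σ₃ := by
  obtain ⟨p, hp, hp1, φ, ψ, hφ, hψ, hψφ, hφψ, hconj, α, hα, hcoc⟩ := h12
  obtain ⟨q, hq, hq1, φ', ψ', hφ', hψ', hψφ', hφψ', hconj', α', hα', hcoc'⟩ := h23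
  have horbit : ∀ᵐ x ∂μ₁, ∀ k : ℕ, φ ((speedup T₁ p)^[k] x) = (T₂ ^ (k : ℤ)) (φ x) ∧
      σ₂ (φ x) k = α ((speedup T₁ p)^[k] x) * σ₁ x (speedupTime T₁ p k x) * (α x)⁻¹ := by
    filter_upwards [ae_forall_iterate_speedup hT₁ hp (hconj.and hcoc)] with x hx k
    exact ⟨apply_iterate_eq_zpow_apply (fun k => (hx k).1) k,
      apply_natCast_eq_conj_speedupTime hσ₁ hσ₂ (fun k => (hx k).1) (fun k => (hx k).2) k⟩
  refine ⟨fun x => speedupTime T₁ p (q (φ x)) x,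
    Measurable.apply_index (measurable_speedupTime hT₁.measurable hp) (hq.comp hφ.measurable),
    fun x => one_le_speedupTime hp1 (hq1 _) x, fun x => φ' (φ x), fun y => ψ (ψ' y),
    hφ'.comp hφ, hψ.comp hψ', ae_leftInverse_comp hφ.quasiMeasurePreserving hψφ hψφ',
    ae_leftInverse_comp hψ'.quasiMeasurePreserving hφψ' hφψ, ?_,
    fun x => α' (φ x) * α x, measurableSet_mul_eq (fun π => hφ.measurable (hα' π)) hα, ?_⟩
  · filter_upwards [horbit, hφ.quasiMeasurePreserving.ae hconj'] with x hx hTx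
    rw [zpow_speedupTime_apply, (hx _).1]
    exact hTx
  · filter_upwards [horbit, hφ.quasiMeasurePreserving.ae hcoc'] with x hx hσx
    obtain ⟨hφx, hσ₂x⟩ := hx (q (φ x))
    rw [hσx, zpow_speedupTime_apply, ← hφx, hσ₂x]
    group

/-- The relation `⤳` on `n`-point extensions is transitive. -/
theorem leads_trans
    {X₁ X₂ X₃ : Type*} [MeasurableSpace X₁] [MeasurableSpace X₂] [MeasurableSpace X₃]
    {n : ℕ}
    (μ₁ : Measure X₁) [IsProbabilityMeasure μ₁]
    (μ₂ : Measure X₂) [IsProbabilityMeasure μ₂]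
    (μ₃ : Measure X₃) [IsProbabilityMeasure μ₃]
    (T₁ : Equiv.Perm X₁) (T₂ : Equiv.Perm X₂) (T₃ : Equiv.Perm X₃)
    (hT₁ : MeasurePreserving T₁ μ₁ μ₁) (hT₂ : MeasurePreserving T₂ μ₂ μ₂)
    (hT₃ : MeasurePreserving T₃ μ₃ μ₃)
    (σ₁ : X₁ → ℤ → Equiv.Perm (Fin n)) (σ₂ : X₂ → ℤ → Equiv.Perm (Fin n))
    (σ₃ : X₃ → ℤ → Equiv.Perm (Fin n))
    (hσ₁ : ∀ x (m k : ℤ), σ₁ x (m + k) = σ₁ ((T₁ ^ k) x) m * σ₁ x k)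
    (hσ₂ : ∀ x (m k : ℤ), σ₂ x (m + k) = σ₂ ((T₂ ^ k) x) m * σ₂ x k)
    (hσ₃ : ∀ x (m k : ℤ), σ₃ x (m + k) = σ₃ ((T₃ ^ k) x) m * σ₃ x k)
    (h12 : Leads μ₁ μ₂ T₁ T₂ σ₁ σ₂) (h23 : Leads μ₂ μ₃ T₂ T₃ σ₂ σ₃) :
    Leads μ₁ μ₃ T₁ T₃ σ₁ σ₃ :=
  leads_trans_general μ₁ μ₂ μ₃ T₁ T₂ T₃ hT₁ σ₁ σ₂ σ₃ hσ₁ hσ₂ h12 h23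
end

section
/- If 𝒫 and 𝒫' are partitions of ℕ into two-element sets whose symmetric difference (as sets of blocks) is infinite, then no conjugate of G_𝒫 in S_f contains G_{𝒫'}: for every ξ ∈ S_f, G_{𝒫'} ⊄ ξ G_𝒫 ξ⁻¹. -/
/-- A permutation of `ℕ` is finitely supported if it moves only finitely many points. -/
def FinSupp (π : Equiv.Perm ℕ) : Prop := {k : ℕ | π k ≠ k}.Finite

/-- A partition of `ℕ` into two-element sets. -/
def IsPairPartition (P : Set (Set ℕ)) : Prop :=
  (∀ A ∈ P, ∃ a b : ℕ, a ≠ b ∧ A = {a, b}) ∧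
  (∀ A ∈ P, ∀ B ∈ P, A ≠ B → Disjoint A B) ∧
  ⋃₀ P = Set.univ

/-- `G_𝒫`: the finitely supported permutations of `ℕ` mapping each block of `𝒫`
onto a block of `𝒫`. -/
def GP (P : Set (Set ℕ)) : Set (Equiv.Perm ℕ) :=
  {π | FinSupp π ∧ ∀ A ∈ P, π '' A ∈ P}

/-!
A transposition `swap a b` preserves a pair partition `𝒬` only if `{a, b}` is a block of `𝒬`.
If `G_{𝒫'} ⊆ ξ G_𝒫 ξ⁻¹ = G_{ξ𝒫}`, applying this to the transpositions of the blocks of `𝒫'`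
gives `𝒫' ⊆ ξ𝒫`, hence `𝒫' = ξ𝒫`. But `ξ` is finitely supported, so it moves only finitely
many blocks of `𝒫`, and the symmetric difference of `𝒫` and `ξ𝒫` is finite.
-/

open scoped symmDiff

lemma conj_image_mem_image {α : Type*} {P : Set (Set α)} {σ : Equiv.Perm α}
    (hσ : ∀ A ∈ P, σ '' A ∈ P) (ξ : Equiv.Perm α) :
    ∀ B ∈ (ξ '' ·) '' P, (ξ * σ * ξ⁻¹) '' B ∈ (ξ '' ·) '' P := by
  rintro _ ⟨A, hA, rfl⟩
  exact ⟨σ '' A, hσ A hA, by simp [Set.image_image]⟩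

lemma finSupp_swap (a b : ℕ) : FinSupp (Equiv.swap a b) :=
  (Set.toFinite {a, b}).subset fun x hx => by
    by_contra h
    simp only [Set.mem_insert_iff, Set.mem_singleton_iff, not_or] at h
    exact hx (Equiv.swap_apply_of_ne_of_ne h.1 h.2)

namespace IsPairPartition

variable {P Q : Set (Set ℕ)}

lemma eq_of_mem_of_mem (hP : IsPairPartition P) {A B : Set ℕ} (hA : A ∈ P) (hB : B ∈ P)
    {x : ℕ} (hxA : x ∈ A) (hxB : x ∈ B) : A = B := by
  by_contra hne
  exact Set.disjoint_left.1 (hP.2.1 A hA B hB hne) hxA hxB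

lemma exists_pair_mem (hP : IsPairPartition P) (x : ℕ) :
    ∃ y, y ≠ x ∧ ({x, y} : Set ℕ) ∈ P := by
  obtain ⟨C, hC, hxC⟩ := Set.mem_sUnion.1 (hP.2.2.symm ▸ Set.mem_univ x)
  obtain ⟨c, d, hcd, rfl⟩ := hP.1 C hC
  rcases hxC with rfl | rfl
  · exact ⟨d, hcd.symm, hC⟩
  · exact ⟨c, hcd, by rwa [Set.pair_comm]⟩

lemma eq_of_subset (hP : IsPairPartition P) (hQ : IsPairPartition Q) (h : P ⊆ Q) :
    P = Q := by
  refine h.antisymm fun B hB => ?_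
  obtain ⟨a, b, -, rfl⟩ := hQ.1 B hB
  obtain ⟨y, -, hy⟩ := hP.exists_pair_mem a
  rwa [← hQ.eq_of_mem_of_mem (h hy) hB (Set.mem_insert a _) (Set.mem_insert a _)]

lemma image (hP : IsPairPartition P) (ξ : Equiv.Perm ℕ) :
    IsPairPartition ((ξ '' ·) '' P) := by
  refine ⟨?_, ?_, ?_⟩
  · rintro _ ⟨A, hA, rfl⟩
    obtain ⟨a, b, hab, rfl⟩ := hP.1 A hA
    exact ⟨ξ a, ξ b, ξ.injective.ne hab, Set.image_pair ξ a b⟩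
  · rintro _ ⟨A, hA, rfl⟩ _ ⟨B, hB, rfl⟩ hne
    exact (Set.disjoint_image_iff ξ.injective).2 (hP.2.1 A hA B hB (by rintro rfl; exact hne rfl))
  · refine Set.eq_univ_of_forall fun x => ?_
    obtain ⟨A, hA, hxA⟩ := Set.mem_sUnion.1 (hP.2.2.symm ▸ Set.mem_univ (ξ.symm x))
    exact ⟨ξ '' A, ⟨A, hA, rfl⟩, ξ.symm x, hxA, ξ.apply_symm_apply x⟩

lemma finite_setOf_inter_nonempty (hP : IsPairPartition P) {S : Set ℕ} (hS : S.Finite) :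
    {A ∈ P | (A ∩ S).Nonempty}.Finite := by
  refine (hS.biUnion (t := fun s => {A ∈ P | s ∈ A}) fun s _ => ?_).subset ?_
  · exact Set.Subsingleton.finite fun A ⟨hA, hsA⟩ B ⟨hB, hsB⟩ =>
      hP.eq_of_mem_of_mem hA hB hsA hsB
  · rintro A ⟨hA, s, hsA, hsS⟩
    exact Set.mem_biUnion hsS ⟨hA, hsA⟩

lemma finite_symmDiff_image (hP : IsPairPartition P) {ξ : Equiv.Perm ℕ} (hξ : FinSupp ξ) :
    (P ∆ ((ξ '' ·) '' P)).Finite := by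
  set T := {A ∈ P | (A ∩ {k | ξ k ≠ k}).Nonempty}
  have hT : T.Finite := hP.finite_setOf_inter_nonempty hξ
  have hfix : ∀ A ∈ P, A ∉ T → ξ '' A = A := fun A hA hAT =>
    Set.EqOn.image_eq_self fun x hx => by_contra fun hx' => hAT ⟨hA, x, hx, hx'⟩
  refine (hT.union (hT.image (ξ '' ·))).subset ?_
  rintro A (⟨hA, hAξ⟩ | ⟨⟨A, hA, rfl⟩, hAP⟩)
  · exact Or.inl (by_contra fun hAT => hAξ ⟨A, hA, hfix A hA hAT⟩)
  · refine Or.inr ⟨A, ⟨hA, ?_⟩, rfl⟩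
    by_contra hAT
    exact hAP (by simpa only [hfix A hA fun h => hAT h.2] using hA)

lemma swap_mem_GP (hP : IsPairPartition P) {a b : ℕ} (hab : ({a, b} : Set ℕ) ∈ P) :
    Equiv.swap a b ∈ GP P := by
  refine ⟨finSupp_swap a b, fun B hB => ?_⟩
  by_cases hB' : B = {a, b}
  · subst hB'
    rwa [Set.image_pair, Equiv.swap_apply_left, Equiv.swap_apply_right, Set.pair_comm]
  · have hfix : ∀ x ∈ B, x ∉ ({a, b} : Set ℕ) := fun x hx hx' =>
      hB' (hP.eq_of_mem_of_mem hB hab hx hx')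
    rwa [Set.EqOn.image_eq_self (f := Equiv.swap a b) fun x hx => Equiv.swap_apply_of_ne_of_ne
      (fun h => hfix x hx (.inl h)) (fun h => hfix x hx (.inr h))]

lemma pair_mem_of_swap_image_mem (hP : IsPairPartition P) {a b : ℕ} (hab : a ≠ b)
    (h : ∀ A ∈ P, Equiv.swap a b '' A ∈ P) : ({a, b} : Set ℕ) ∈ P := by
  obtain ⟨e, hea, he⟩ := hP.exists_pair_mem a
  by_cases heb : e = b
  · rwa [← heb]
  have himage : Equiv.swap a b '' {a, e} = {b, e} := by
    rw [Set.image_pair, Equiv.swap_apply_left, Equiv.swap_apply_of_ne_of_ne hea heb]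
  have hblock : ({b, e} : Set ℕ) = {a, e} := hP.eq_of_mem_of_mem (himage ▸ h _ he) he
    (Set.mem_insert_of_mem _ rfl) (Set.mem_insert_of_mem _ rfl)
  rcases hblock ▸ Set.mem_insert b {e} with hba | hbe
  · exact absurd hba.symm hab
  · exact absurd (Set.mem_singleton_iff.1 hbe).symm heb

end IsPairPartition

/-- If `𝒫` and `𝒫'` are partitions of `ℕ` into two-element sets whose symmetric
difference (as sets of blocks) is infinite, then no conjugate of `G_𝒫` in `S_f`
contains `G_{𝒫'}`. -/
theorem no_conjugate_contains (P P' : Set (Set ℕ))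
    (hP : IsPairPartition P) (hP' : IsPairPartition P')
    (hinf : ((P \ P') ∪ (P' \ P)).Infinite) :
    ∀ ξ : Equiv.Perm ℕ, FinSupp ξ → ¬ (GP P' ⊆ (fun π => ξ * π * ξ⁻¹) '' GP P) := by
  intro ξ hξ hsub
  have hsubset : P' ⊆ (ξ '' ·) '' P := by
    intro A hA
    obtain ⟨a, b, hab, rfl⟩ := hP'.1 A hA
    obtain ⟨σ, hσ, hconj⟩ := hsub (hP'.swap_mem_GP hA)
    exact (hP.image ξ).pair_mem_of_swap_image_mem hab (hconj ▸ conj_image_mem_image hσ.2 ξ)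
  rw [hP'.eq_of_subset (hP.image ξ) hsubset] at hinf
  exact hinf (hP.finite_symmDiff_image hξ)
end
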